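/- arXiv:2211.12765 — 7 statements merged into one kernel-verified Lean document; each statement's English description precedes it below -/
import Mathlib

section
/- Theorem 4.2 (controllability criterion): The SLS under logically generated switching is controllable if and only if there exist T ≥ 1 and a logical input sequence γ : Fin T → Fin M such that for every initial logical state α ∈ Fin N, letting σ be the switching-signal sequence generated from α by γ, one has LinearMap.range (Matrix.mulVecLin (A (σ (T−1)) * A (σ (T−2)) * ⋯ * A (σ 0))) ≤ ⨆_{t = 0}^{T−1} LinearMap.range (Matrix.mulVecLin (A (σ (T−1)) * ⋯ * A (σ (t+1)) * B (σ t))) (for t = T−1 the latter product is just B (σ (T−1))). -/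
/-- Extension of a finite sequence `γ : Fin T → α` (with `T ≥ 1`) to `ℕ`,
agreeing with `γ` on `t < T`. -/
def extSeq {α : Type*} {T : ℕ} (hT : 0 < T) (γ : Fin T → α) : ℕ → α :=
  fun t => γ ⟨min t (T - 1), by omega⟩

/-- The logical state sequence generated from `θ₀` by the logical inputs `γ`:
`θ 0 = θ₀`, `θ (t+1) = L (γ t) (θ t)`. -/
def logicState {N M : ℕ} (L : Fin M → Fin N → Fin N) (θ₀ : Fin N)
    (γ : ℕ → Fin M) : ℕ → Fin N
  | 0 => θ₀
  | t + 1 => L (γ t) (logicState L θ₀ γ t)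

/-- The switching signal generated from `θ₀` by the logical inputs `γ`:
`σ t = R (γ t) (θ t)`. -/
def switchSig {q N M : ℕ} (L : Fin M → Fin N → Fin N) (R : Fin M → Fin N → Fin q)
    (θ₀ : Fin N) (γ : ℕ → Fin M) : ℕ → Fin q :=
  fun t => R (γ t) (logicState L θ₀ γ t)

/-- The state trajectory of the switched linear system:
`x 0 = x₀`, `x (t+1) = A (σ t) *ᵥ x t + B (σ t) *ᵥ u t`. -/
def traj {n m q : ℕ} (A : Fin q → Matrix (Fin n) (Fin n) ℝ)
    (B : Fin q → Matrix (Fin n) (Fin m) ℝ) (σ : ℕ → Fin q)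
    (u : ℕ → Fin m → ℝ) (x₀ : Fin n → ℝ) : ℕ → Fin n → ℝ
  | 0 => x₀
  | t + 1 => (A (σ t)).mulVec (traj A B σ u x₀ t) + (B (σ t)).mulVec (u t)

/-- `transMat A σ s t = A (σ (t-1)) * A (σ (t-2)) * ⋯ * A (σ s)` for `s ≤ t`
(and `1` when `t ≤ s`). -/
def transMat {n q : ℕ} (A : Fin q → Matrix (Fin n) (Fin n) ℝ) (σ : ℕ → Fin q)
    (s : ℕ) : ℕ → Matrix (Fin n) (Fin n) ℝ
  | 0 => 1
  | t + 1 => if s ≤ t then A (σ t) * transMat A σ s t else 1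

/-- Reachability of the SLS under logically generated switching. -/
def ReachableSLS {n m q N M : ℕ} (A : Fin q → Matrix (Fin n) (Fin n) ℝ)
    (B : Fin q → Matrix (Fin n) (Fin m) ℝ) (L : Fin M → Fin N → Fin N)
    (R : Fin M → Fin N → Fin q) : Prop :=
  ∀ (x : Fin n → ℝ) (θ₀ : Fin N), ∃ T : ℕ, ∃ hT : 1 ≤ T, ∃ γ : Fin T → Fin M,
    ∃ u : Fin T → (Fin m → ℝ),
      traj A B (switchSig L R θ₀ (extSeq hT γ)) (extSeq hT u) 0 T = x

/-- Controllability of the SLS under logically generated switching. -/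
def ControllableSLS {n m q N M : ℕ} (A : Fin q → Matrix (Fin n) (Fin n) ℝ)
    (B : Fin q → Matrix (Fin n) (Fin m) ℝ) (L : Fin M → Fin N → Fin N)
    (R : Fin M → Fin N → Fin q) : Prop :=
  ∀ x : Fin n → ℝ, ∃ T : ℕ, ∃ hT : 1 ≤ T, ∃ γ : Fin T → Fin M,
    ∀ θ₀ : Fin N, ∃ u : Fin T → (Fin m → ℝ),
      traj A B (switchSig L R θ₀ (extSeq hT γ)) (extSeq hT u) x T = 0

/-- Observability of the SLS under logically generated switching. -/
def ObservableSLS {n m p q N M : ℕ} (A : Fin q → Matrix (Fin n) (Fin n) ℝ)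
    (B : Fin q → Matrix (Fin n) (Fin m) ℝ) (C : Fin q → Matrix (Fin p) (Fin n) ℝ)
    (L : Fin M → Fin N → Fin N) (R : Fin M → Fin N → Fin q) : Prop :=
  ∃ T : ℕ, ∃ hT : 1 ≤ T, ∃ γ : Fin T → Fin M,
    ∀ (θ₀ : Fin N) (u : Fin T → (Fin m → ℝ)) (x₀ x₀' : Fin n → ℝ),
      (∀ t < T,
          (C (switchSig L R θ₀ (extSeq hT γ) t)).mulVec
            (traj A B (switchSig L R θ₀ (extSeq hT γ)) (extSeq hT u) x₀ t) =
          (C (switchSig L R θ₀ (extSeq hT γ) t)).mulVec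
            (traj A B (switchSig L R θ₀ (extSeq hT γ)) (extSeq hT u) x₀' t)) →
        x₀ = x₀'

/-- Reconstructibility of the SLS under logically generated switching. -/
def ReconstructibleSLS {n m p q N M : ℕ} (A : Fin q → Matrix (Fin n) (Fin n) ℝ)
    (B : Fin q → Matrix (Fin n) (Fin m) ℝ) (C : Fin q → Matrix (Fin p) (Fin n) ℝ)
    (L : Fin M → Fin N → Fin N) (R : Fin M → Fin N → Fin q) : Prop :=
  ∃ T : ℕ, ∃ hT : 1 ≤ T, ∃ γ : Fin T → Fin M,
    ∀ (θ₀ : Fin N) (u : Fin T → (Fin m → ℝ)) (x₀ x₀' : Fin n → ℝ),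
      (∀ t < T,
          (C (switchSig L R θ₀ (extSeq hT γ) t)).mulVec
            (traj A B (switchSig L R θ₀ (extSeq hT γ)) (extSeq hT u) x₀ t) =
          (C (switchSig L R θ₀ (extSeq hT γ) t)).mulVec
            (traj A B (switchSig L R θ₀ (extSeq hT γ)) (extSeq hT u) x₀' t)) →
        traj A B (switchSig L R θ₀ (extSeq hT γ)) (extSeq hT u) x₀ T =
          traj A B (switchSig L R θ₀ (extSeq hT γ)) (extSeq hT u) x₀' T


open Matrix

/-! By variation of constants, `x T = Φ x + ∑ₜ Φₜ B u t`, so `x` can be steered to `0` along the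
logical input word `γ` from every initial logical state iff `x` lies in the subspace
`⋂_θ Φ_θ⁻¹ (reachable subspace)`. Controllability says that these subspaces, indexed by the
countably many finite words `γ`, cover `ℝⁿ`; by the Baire category theorem one of them is all of
`ℝⁿ`, which is the criterion. -/

theorem Submodule.exists_eq_top_of_forall_exists_mem {ι 𝕜 E : Type*} [Countable ι]
    [NontriviallyNormedField 𝕜] [CompleteSpace 𝕜] [NormedAddCommGroup E] [NormedSpace 𝕜 E]
    [FiniteDimensional 𝕜 E] (K : ι → Submodule 𝕜 E) (hK : ∀ x, ∃ i, x ∈ K i) :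
    ∃ i, K i = ⊤ := by
  have := FiniteDimensional.complete 𝕜 E
  have hcover : ⋃ i, (K i : Set E) = Set.univ :=
    Set.eq_univ_of_forall fun x => Set.mem_iUnion.mpr (hK x)
  obtain ⟨i, hi⟩ := nonempty_interior_of_iUnion_of_closed
    (fun i => (K i).closed_of_finiteDimensional) hcover
  exact ⟨i, (K i).eq_top_of_nonempty_interior' hi⟩

theorem Submodule.mem_iSup_range_iff_exists_sum {ι R M N : Type*} [Fintype ι] [Semiring R]
    [AddCommMonoid M] [AddCommMonoid N] [Module R M] [Module R N]
    (f : ι → M →ₗ[R] N) (y : N) :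
    y ∈ ⨆ i, LinearMap.range (f i) ↔ ∃ v : ι → M, ∑ i, f i (v i) = y := by
  classical
  refine ⟨fun hy => ?_, ?_⟩
  · refine Submodule.iSup_induction _ (motive := fun y => ∃ v : ι → M, ∑ i, f i (v i) = y) hy
      (fun i y hy => ?_) ⟨0, by simp⟩ ?_
    · obtain ⟨x, rfl⟩ := hy
      exact ⟨Pi.single i x, by simp [apply_ite (f _), Pi.single_apply]⟩
    · rintro _ _ ⟨v, rfl⟩ ⟨w, rfl⟩
      exact ⟨v + w, by simp [Finset.sum_add_distrib]⟩
  · rintro ⟨v, rfl⟩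
    exact Submodule.sum_mem _ fun i _ => Submodule.mem_iSup_of_mem i (LinearMap.mem_range_self _ _)

theorem extSeq_of_lt {α : Type*} {T : ℕ} (hT : 0 < T) (γ : Fin T → α) {t : ℕ} (ht : t < T) :
    extSeq hT γ t = γ ⟨t, ht⟩ := by
  simp only [extSeq, Nat.min_eq_left (Nat.le_sub_one_of_lt ht)]

section Trajectory

variable {n m q : ℕ} (A : Fin q → Matrix (Fin n) (Fin n) ℝ) (B : Fin q → Matrix (Fin n) (Fin m) ℝ)
  (σ : ℕ → Fin q)

theorem transMat_self (s : ℕ) : transMat A σ s s = 1 := by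
  cases s <;> simp [transMat]

theorem transMat_succ_of_le {s t : ℕ} (h : s ≤ t) :
    transMat A σ s (t + 1) = A (σ t) * transMat A σ s t :=
  if_pos h

theorem traj_eq_transMat_mulVec_add_sum (u : ℕ → Fin m → ℝ) (x₀ : Fin n → ℝ) (T : ℕ) :
    traj A B σ u x₀ T = transMat A σ 0 T *ᵥ x₀ +
      ∑ t ∈ Finset.range T, (transMat A σ (t + 1) T * B (σ t)) *ᵥ u t := by
  induction T with
  | zero => simp [traj, transMat]
  | succ T ih =>
    have hsum : ∑ t ∈ Finset.range T, (transMat A σ (t + 1) (T + 1) * B (σ t)) *ᵥ u t =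
        A (σ T) *ᵥ ∑ t ∈ Finset.range T, (transMat A σ (t + 1) T * B (σ t)) *ᵥ u t := by
      rw [mulVec_sum]
      refine Finset.sum_congr rfl fun t ht => ?_
      rw [transMat_succ_of_le _ _ (Finset.mem_range.mp ht), Matrix.mul_assoc,
        ← mulVec_mulVec]
    rw [traj, ih, Finset.sum_range_succ, hsum, transMat_succ_of_le _ _ T.zero_le, transMat_self,
      Matrix.one_mul, mulVec_add, mulVec_mulVec, add_assoc]

def reachableSubspace (T : ℕ) : Submodule ℝ (Fin n → ℝ) :=
  ⨆ t : Fin T, LinearMap.range (transMat A σ (t + 1) T * B (σ t)).mulVecLin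

theorem exists_traj_eq_zero_iff {T : ℕ} (hT : 0 < T) (x : Fin n → ℝ) :
    (∃ u : Fin T → Fin m → ℝ, traj A B σ (extSeq hT u) x T = 0) ↔
      transMat A σ 0 T *ᵥ x ∈ reachableSubspace A B σ T := by
  have htraj (u : Fin T → Fin m → ℝ) : traj A B σ (extSeq hT u) x T = transMat A σ 0 T *ᵥ x +
      ∑ t : Fin T, (transMat A σ (t + 1) T * B (σ t)).mulVecLin (u t) := by
    rw [traj_eq_transMat_mulVec_add_sum, ← Fin.sum_univ_eq_sum_range]
    simp only [extSeq_of_lt hT _ (Fin.is_lt _), mulVecLin_apply]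
  simp only [reachableSubspace, Submodule.mem_iSup_range_iff_exists_sum, htraj]
  constructor
  · rintro ⟨u, hu⟩
    refine ⟨-u, ?_⟩
    simp only [Pi.neg_apply, map_neg, Finset.sum_neg_distrib]
    exact neg_eq_of_add_eq_zero_left hu
  · rintro ⟨v, hv⟩
    refine ⟨-v, ?_⟩
    simp only [Pi.neg_apply, map_neg, Finset.sum_neg_distrib, hv, add_neg_cancel]

end Trajectory

section LogicalSwitching

variable {n m q N M : ℕ} (A : Fin q → Matrix (Fin n) (Fin n) ℝ)
  (B : Fin q → Matrix (Fin n) (Fin m) ℝ) (L : Fin M → Fin N → Fin N) (R : Fin M → Fin N → Fin q)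

def nullControllableSubspace {T : ℕ} (hT : 0 < T) (γ : Fin T → Fin M) :
    Submodule ℝ (Fin n → ℝ) :=
  ⨅ θ₀ : Fin N, (reachableSubspace A B (switchSig L R θ₀ (extSeq hT γ)) T).comap
    (transMat A (switchSig L R θ₀ (extSeq hT γ)) 0 T).mulVecLin

theorem mem_nullControllableSubspace_iff {T : ℕ} (hT : 0 < T) (γ : Fin T → Fin M)
    (x : Fin n → ℝ) :
    x ∈ nullControllableSubspace A B L R hT γ ↔ ∀ θ₀ : Fin N, ∃ u : Fin T → Fin m → ℝ,
      traj A B (switchSig L R θ₀ (extSeq hT γ)) (extSeq hT u) x T = 0 := by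
  simp only [nullControllableSubspace, Submodule.mem_iInf, Submodule.mem_comap,
    mulVecLin_apply, exists_traj_eq_zero_iff]

theorem nullControllableSubspace_eq_top_iff {T : ℕ} (hT : 0 < T) (γ : Fin T → Fin M) :
    nullControllableSubspace A B L R hT γ = ⊤ ↔ ∀ θ₀ : Fin N,
      LinearMap.range (transMat A (switchSig L R θ₀ (extSeq hT γ)) 0 T).mulVecLin ≤
        reachableSubspace A B (switchSig L R θ₀ (extSeq hT γ)) T := by
  simp only [nullControllableSubspace, iInf_eq_top, LinearMap.range_le_iff_comap]

end LogicalSwitching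

theorem controllability_criterion_general (n m q N M : ℕ)
    (A : Fin q → Matrix (Fin n) (Fin n) ℝ) (B : Fin q → Matrix (Fin n) (Fin m) ℝ)
    (L : Fin M → Fin N → Fin N) (R : Fin M → Fin N → Fin q) :
    ControllableSLS A B L R ↔
      ∃ T : ℕ, ∃ hT : 1 ≤ T, ∃ γ : Fin T → Fin M, ∀ α : Fin N,
        LinearMap.range
            (Matrix.mulVecLin (transMat A (switchSig L R α (extSeq hT γ)) 0 T)) ≤
          ⨆ t : Fin T, LinearMap.range
            (Matrix.mulVecLin
              (transMat A (switchSig L R α (extSeq hT γ)) ((t : ℕ) + 1) T *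
                B (switchSig L R α (extSeq hT γ) (t : ℕ)))) := by
  constructor
  · intro hctrl
    obtain ⟨⟨⟨T, hT⟩, γ⟩, htop⟩ := Submodule.exists_eq_top_of_forall_exists_mem
      (fun i : Σ T : {T : ℕ // 1 ≤ T}, Fin T.1 → Fin M =>
        nullControllableSubspace A B L R i.1.2 i.2)
      fun x => by
        obtain ⟨T, hT, γ, hγ⟩ := hctrl x
        exact ⟨⟨⟨T, hT⟩, γ⟩, (mem_nullControllableSubspace_iff A B L R hT γ x).mpr hγ⟩
    exact ⟨T, hT, γ, (nullControllableSubspace_eq_top_iff A B L R hT γ).mp htop⟩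
  · rintro ⟨T, hT, γ, hcrit⟩ x
    have htop := (nullControllableSubspace_eq_top_iff A B L R hT γ).mpr hcrit
    exact ⟨T, hT, γ,
      (mem_nullControllableSubspace_iff A B L R hT γ x).mp (htop ▸ Submodule.mem_top)⟩

/-- **Theorem 4.2 (controllability criterion).** -/
theorem controllability_criterion (n m p q N M : ℕ)
    (hn : 0 < n) (hm : 0 < m) (hp : 0 < p) (hq : 0 < q) (hN : 0 < N) (hM : 0 < M)
    (A : Fin q → Matrix (Fin n) (Fin n) ℝ) (B : Fin q → Matrix (Fin n) (Fin m) ℝ)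
    (C : Fin q → Matrix (Fin p) (Fin n) ℝ)
    (L : Fin M → Fin N → Fin N) (R : Fin M → Fin N → Fin q) :
    ControllableSLS A B L R ↔
      ∃ T : ℕ, ∃ hT : 1 ≤ T, ∃ γ : Fin T → Fin M, ∀ α : Fin N,
        LinearMap.range
            (Matrix.mulVecLin (transMat A (switchSig L R α (extSeq hT γ)) 0 T)) ≤
          ⨆ t : Fin T, LinearMap.range
            (Matrix.mulVecLin
              (transMat A (switchSig L R α (extSeq hT γ)) ((t : ℕ) + 1) T *
                B (switchSig L R α (extSeq hT γ) (t : ℕ)))) :=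
  controllability_criterion_general n m q N M A B L R
end

section
/- Theorem 5.2 (reconstructibility criterion): The SLS under logically generated switching is reconstructible if and only if there exist T ≥ 1 and a logical input sequence γ : Fin T → Fin M such that for every initial logical state α ∈ Fin N, letting σ be the switching-signal sequence generated from α by γ, one has LinearMap.range (Matrix.mulVecLin ((A (σ 0))ᵀ * (A (σ 1))ᵀ * ⋯ * (A (σ (T−1)))ᵀ)) ≤ ⨆_{t = 0}^{T−1} LinearMap.range (Matrix.mulVecLin ((A (σ 0))ᵀ * ⋯ * (A (σ (t−1)))ᵀ * (C (σ t))ᵀ)) (for t = 0 the latter product is just (C (σ 0))ᵀ). -/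
open Matrix

/-! Two trajectories driven by the same inputs differ by `transMat A σ 0 t *ᵥ (x₀ - x₀')`, so
for a fixed switching signal reconstructibility says that the common kernel of the output maps
`C (σ t) * transMat A σ 0 t`, `t < T`, lies in the kernel of `transMat A σ 0 T`. Identifying
`Fin n → ℝ` with its dual through the dot product, the range of a transposed matrix is the
annihilator of the kernel of the matrix; annihilators reverse inclusions and turn finite
intersections into sums, which gives the range condition. -/

namespace Matrix

variable {K m n : Type*} [Field K] [Fintype m] [DecidableEq m] [Fintype n] [DecidableEq n]

theorem dotProductEquiv_comp_mulVecLin_transpose (M : Matrix m n K) :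
    (dotProductEquiv K n).toLinearMap ∘ₗ Mᵀ.mulVecLin =
      M.mulVecLin.dualMap ∘ₗ (dotProductEquiv K m).toLinearMap := by
  ext v w
  simp

theorem map_range_mulVecLin_transpose (M : Matrix m n K) :
    (LinearMap.range Mᵀ.mulVecLin).map (dotProductEquiv K n).toLinearMap =
      (LinearMap.ker M.mulVecLin).dualAnnihilator := by
  rw [← LinearMap.range_comp, dotProductEquiv_comp_mulVecLin_transpose, LinearEquiv.range_comp,
    LinearMap.range_dualMap_eq_dualAnnihilator_ker]

theorem range_mulVecLin_transpose_le_iSup_iff {ι : Type*} [Finite ι] {p : ι → Type*}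
    [∀ i, Fintype (p i)] [∀ i, DecidableEq (p i)] (H : Matrix m n K)
    (G : ∀ i, Matrix (p i) n K) :
    LinearMap.range Hᵀ.mulVecLin ≤ ⨆ i, LinearMap.range (G i)ᵀ.mulVecLin ↔
      ⨅ i, LinearMap.ker (G i).mulVecLin ≤ LinearMap.ker H.mulVecLin := by
  rw [← Submodule.map_le_map_iff_of_injective (dotProductEquiv K n).injective, Submodule.map_iSup]
  simp only [map_range_mulVecLin_transpose]
  rw [← Subspace.dualAnnihilator_iInf_eq, Subspace.dualAnnihilator_le_dualAnnihilator_iff]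

end Matrix

section Trajectories

variable {n m p q : ℕ} (A : Fin q → Matrix (Fin n) (Fin n) ℝ)
  (B : Fin q → Matrix (Fin n) (Fin m) ℝ) (C : Fin q → Matrix (Fin p) (Fin n) ℝ)
  (σ : ℕ → Fin q) (u : ℕ → Fin m → ℝ)

theorem traj_sub_traj (x₀ x₀' : Fin n → ℝ) (t : ℕ) :
    traj A B σ u x₀ t - traj A B σ u x₀' t = transMat A σ 0 t *ᵥ (x₀ - x₀') := by
  induction t with
  | zero => simp [traj, transMat]
  | succ t ih =>
    rw [traj, traj, add_sub_add_right_eq_sub, ← mulVec_sub, ih, mulVec_mulVec]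
    simp [transMat]

theorem mulVec_traj_eq_mulVec_traj_iff (x₀ x₀' : Fin n → ℝ) (t : ℕ) :
    C (σ t) *ᵥ traj A B σ u x₀ t = C (σ t) *ᵥ traj A B σ u x₀' t ↔
      (C (σ t) * transMat A σ 0 t) *ᵥ (x₀ - x₀') = 0 := by
  rw [← sub_eq_zero, ← mulVec_sub, traj_sub_traj, mulVec_mulVec]

theorem traj_eq_of_output_eq_iff_ker_le (T : ℕ) :
    (∀ x₀ x₀' : Fin n → ℝ,
        (∀ t < T, C (σ t) *ᵥ traj A B σ u x₀ t = C (σ t) *ᵥ traj A B σ u x₀' t) →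
          traj A B σ u x₀ T = traj A B σ u x₀' T) ↔
      ⨅ t : Fin T, LinearMap.ker (C (σ t) * transMat A σ 0 t).mulVecLin ≤
        LinearMap.ker (transMat A σ 0 T).mulVecLin := by
  simp only [mulVec_traj_eq_mulVec_traj_iff, ← sub_eq_zero (a := traj A B σ u _ T),
    traj_sub_traj, SetLike.le_def, Submodule.mem_iInf, LinearMap.mem_ker, mulVecLin_apply,
    Fin.forall_iff]
  exact ⟨fun h d hd ↦ by simpa using h d 0 (by simpa using hd), fun h _ _ ↦ @h _⟩

end Trajectories

-- `(A (σ 0))ᵀ * ⋯ * (A (σ (t-1)))ᵀ = (transMat A σ 0 t)ᵀ`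
theorem reconstructibility_criterion_general (n m p q N M : ℕ)
    (A : Fin q → Matrix (Fin n) (Fin n) ℝ) (B : Fin q → Matrix (Fin n) (Fin m) ℝ)
    (C : Fin q → Matrix (Fin p) (Fin n) ℝ)
    (L : Fin M → Fin N → Fin N) (R : Fin M → Fin N → Fin q) :
    ReconstructibleSLS A B C L R ↔
      ∃ T : ℕ, ∃ hT : 1 ≤ T, ∃ γ : Fin T → Fin M, ∀ α : Fin N,
        LinearMap.range
            (Matrix.mulVecLin ((transMat A (switchSig L R α (extSeq hT γ)) 0 T)ᵀ)) ≤
          ⨆ t : Fin T, LinearMap.range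
            (Matrix.mulVecLin
              ((transMat A (switchSig L R α (extSeq hT γ)) 0 (t : ℕ))ᵀ *
                (C (switchSig L R α (extSeq hT γ) (t : ℕ)))ᵀ)) := by
  refine exists_congr fun T ↦ exists_congr fun hT ↦ exists_congr fun γ ↦
    forall_congr' fun α ↦ ?_
  simp only [← transpose_mul, range_mulVecLin_transpose_le_iSup_iff]
  exact (forall_congr' fun u ↦ traj_eq_of_output_eq_iff_ker_le A B C _ (extSeq hT u) T).trans
    (forall_const _)

/-- **Theorem 5.2 (reconstructibility criterion).** Note that
`(A (σ 0))ᵀ * ⋯ * (A (σ (t-1)))ᵀ = (A (σ (t-1)) * ⋯ * A (σ 0))ᵀ = (transMat A σ 0 t)ᵀ`. -/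
theorem reconstructibility_criterion (n m p q N M : ℕ)
    (hn : 0 < n) (hm : 0 < m) (hp : 0 < p) (hq : 0 < q) (hN : 0 < N) (hM : 0 < M)
    (A : Fin q → Matrix (Fin n) (Fin n) ℝ) (B : Fin q → Matrix (Fin n) (Fin m) ℝ)
    (C : Fin q → Matrix (Fin p) (Fin n) ℝ)
    (L : Fin M → Fin N → Fin N) (R : Fin M → Fin N → Fin q) :
    ReconstructibleSLS A B C L R ↔
      ∃ T : ℕ, ∃ hT : 1 ≤ T, ∃ γ : Fin T → Fin M, ∀ α : Fin N,
        LinearMap.range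
            (Matrix.mulVecLin ((transMat A (switchSig L R α (extSeq hT γ)) 0 T)ᵀ)) ≤
          ⨆ t : Fin T, LinearMap.range
            (Matrix.mulVecLin
              ((transMat A (switchSig L R α (extSeq hT γ)) 0 (t : ℕ))ᵀ *
                (C (switchSig L R α (extSeq hT γ) (t : ℕ)))ᵀ)) :=
  reconstructibility_criterion_general n m p q N M A B C L R
end

section
/- Remark 5.2: If the matrix A i is invertible for every i ∈ Fin q (i.e., the switched linear system is reversible), then the SLS under logically generated switching is observable if and only if it is reconstructible. -/
theorem traj_injective {n m q : ℕ} {A : Fin q → Matrix (Fin n) (Fin n) ℝ}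
    (B : Fin q → Matrix (Fin n) (Fin m) ℝ) (σ : ℕ → Fin q) (u : ℕ → Fin m → ℝ)
    (hA : ∀ i : Fin q, IsUnit (A i)) (t : ℕ) :
    Function.Injective fun x₀ => traj A B σ u x₀ t := by
  induction t with
  | zero => exact Function.injective_id
  | succ t ih =>
    exact (add_left_injective _).comp
      ((Matrix.mulVec_injective_iff_isUnit.mpr (hA (σ t))).comp ih)

section

variable {n m p q N M : ℕ} {A : Fin q → Matrix (Fin n) (Fin n) ℝ}
  {B : Fin q → Matrix (Fin n) (Fin m) ℝ} {C : Fin q → Matrix (Fin p) (Fin n) ℝ}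
  {L : Fin M → Fin N → Fin N} {R : Fin M → Fin N → Fin q}

theorem ReconstructibleSLS.of_observable (h : ObservableSLS A B C L R) :
    ReconstructibleSLS A B C L R := by
  obtain ⟨T, hT, γ, hobs⟩ := h
  exact ⟨T, hT, γ, fun θ₀ u x₀ x₀' hy => by rw [hobs θ₀ u x₀ x₀' hy]⟩

theorem ObservableSLS.of_reconstructible (hA : ∀ i : Fin q, IsUnit (A i))
    (h : ReconstructibleSLS A B C L R) : ObservableSLS A B C L R := by
  obtain ⟨T, hT, γ, hrec⟩ := h
  exact ⟨T, hT, γ, fun θ₀ u x₀ x₀' hy => traj_injective B _ _ hA T (hrec θ₀ u x₀ x₀' hy)⟩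

end

theorem observable_iff_reconstructible_of_invertible_general (n m p q N M : ℕ)
    (A : Fin q → Matrix (Fin n) (Fin n) ℝ) (B : Fin q → Matrix (Fin n) (Fin m) ℝ)
    (C : Fin q → Matrix (Fin p) (Fin n) ℝ)
    (L : Fin M → Fin N → Fin N) (R : Fin M → Fin N → Fin q)
    (hA : ∀ i : Fin q, IsUnit (A i)) :
    ObservableSLS A B C L R ↔ ReconstructibleSLS A B C L R :=
  ⟨ReconstructibleSLS.of_observable, ObservableSLS.of_reconstructible hA⟩

/-- **Remark 5.2.** If every `A i` is invertible (the system is reversible),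
then observability and reconstructibility of the SLS under logically generated
switching are equivalent. -/
theorem observable_iff_reconstructible_of_invertible (n m p q N M : ℕ)
    (hn : 0 < n) (hm : 0 < m) (hp : 0 < p) (hq : 0 < q) (hN : 0 < N) (hM : 0 < M)
    (A : Fin q → Matrix (Fin n) (Fin n) ℝ) (B : Fin q → Matrix (Fin n) (Fin m) ℝ)
    (C : Fin q → Matrix (Fin p) (Fin n) ℝ)
    (L : Fin M → Fin N → Fin N) (R : Fin M → Fin N → Fin q)
    (hA : ∀ i : Fin q, IsUnit (A i)) :
    ObservableSLS A B C L R ↔ ReconstructibleSLS A B C L R :=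
  observable_iff_reconstructible_of_invertible_general n m p q N M A B C L R hA
end

section
/- Proposition 2.2.1(1): For every i ∈ Fin b and j ∈ Fin a, the entry (C_ℓ) i j is positive if and only if the network is ℓ-step input-state set reachable from Ω⁰ j to Ωᵈ i, i.e., there exists an ℓ-step input-state trajectory (γ 0, θ 0), …, (γ ℓ, θ ℓ) with (γ 0, θ 0) ∈ Ω⁰ j and (γ ℓ, θ ℓ) ∈ Ωᵈ i. -/
attribute [local instance] Classical.propDecidable

/-- The input-state matrix `𝐋` of the logical control network `L`:
`𝐋 (γ', θ') (γ, θ) = 1` if `θ' = L γ θ` and `0` otherwise. -/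
def inputStateMat {M N : ℕ} (L : Fin M → Fin N → Fin N) :
    Matrix (Fin M × Fin N) (Fin M × Fin N) ℕ :=
  fun p' p => if p'.2 = L p.1 p.2 then 1 else 0

/-- The index matrix of a finite family of input-state subsets. -/
noncomputable def idxMat {M N s : ℕ} (Ω : Fin s → Set (Fin M × Fin N)) :
    Matrix (Fin M × Fin N) (Fin s) ℕ :=
  fun v j => if v ∈ Ω j then 1 else 0

/-- The `ℓ`-step input-state set reachability matrix
`C_ℓ = (P_{Ωᵈ})ᵀ * 𝐋^ℓ * P_{Ω⁰}`. -/
noncomputable def reachMat {M N a b : ℕ} (L : Fin M → Fin N → Fin N) (ℓ : ℕ)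
    (Ω0 : Fin a → Set (Fin M × Fin N)) (Ωd : Fin b → Set (Fin M × Fin N)) :
    Matrix (Fin b) (Fin a) ℕ :=
  (idxMat Ωd).transpose * (inputStateMat L) ^ ℓ * idxMat Ω0

/-- `w : Fin (ℓ+1) → Fin M × Fin N` is an `ℓ`-step input-state trajectory of the
logical control network `L`: `θ (t+1) = L (γ t) (θ t)` for all `t < ℓ`. -/
def IsISTraj {M N : ℕ} (L : Fin M → Fin N → Fin N) (ℓ : ℕ)
    (w : Fin (ℓ + 1) → Fin M × Fin N) : Prop :=
  ∀ t : Fin ℓ, (w t.succ).2 = L (w t.castSucc).1 (w t.castSucc).2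

/-! Over a canonically ordered semiring without zero divisors, an entry of a product is positive
iff some chain of positive entries links its indices. Hence `(𝐋 ^ ℓ) q p > 0` iff some
`ℓ`-step trajectory runs from `p` to `q`, and the two index matrices only pin the endpoints of that
trajectory into `Ω⁰ j` and `Ωᵈ i`. -/

namespace Matrix

variable {ι α β R : Type*} [CommSemiring R] [PartialOrder R]

/-- Steps go from column to row: `0 < A q p` allows a step from `p` to `q`. -/
def IsPosWalk (A : Matrix ι ι R) {n : ℕ} (w : Fin (n + 1) → ι) : Prop :=
  ∀ t : Fin n, 0 < A (w t.succ) (w t.castSucc)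

theorem isPosWalk_cons_iff (A : Matrix ι ι R) {n : ℕ} (p : ι) (w : Fin (n + 1) → ι) :
    IsPosWalk A (Fin.cons p w : Fin (n + 2) → ι) ↔ 0 < A (w 0) p ∧ IsPosWalk A w := by
  simp only [IsPosWalk, Fin.forall_fin_succ, Fin.castSucc_zero,
    Fin.cons_zero, ← Fin.succ_castSucc, Fin.cons_succ]

variable [CanonicallyOrderedAdd R] [NoZeroDivisors R]

theorem mul_apply_pos_iff [Fintype ι] (A : Matrix α ι R) (B : Matrix ι β R) (i : α) (j : β) :
    0 < (A * B) i j ↔ ∃ k, 0 < A i k ∧ 0 < B k j := by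
  simp only [mul_apply, Finset.sum_pos_iff, Finset.mem_univ, true_and,
    CanonicallyOrderedAdd.mul_pos]

theorem mul_mul_apply_pos_iff [Fintype ι] (B : Matrix α ι R) (A : Matrix ι ι R)
    (C : Matrix ι β R) (i : α) (j : β) :
    0 < (B * A * C) i j ↔ ∃ q p, 0 < B i q ∧ 0 < A q p ∧ 0 < C p j := by
  simp only [mul_apply_pos_iff]
  tauto

theorem pow_apply_pos_iff_exists_isPosWalk [Fintype ι] [DecidableEq ι] [Nontrivial R]
    (A : Matrix ι ι R) (n : ℕ) (q p : ι) :
    0 < (A ^ n) q p ↔ ∃ w : Fin (n + 1) → ι, IsPosWalk A w ∧ w 0 = p ∧ w (Fin.last n) = q := by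
  induction n generalizing q p with
  | zero =>
    simp only [pow_zero, one_apply, IsPosWalk, IsEmpty.forall_iff, true_and]
    constructor
    · intro h
      exact ⟨fun _ => p, rfl, by by_contra hne; simp [Ne.symm hne] at h⟩
    · rintro ⟨w, rfl, rfl⟩
      simp [Fin.last_zero]
  | succ n ih =>
    rw [pow_succ, mul_apply_pos_iff, Fin.exists_fin_succ_pi]
    simp only [ih, isPosWalk_cons_iff, Fin.cons_zero, Fin.cons_last]
    constructor
    · rintro ⟨r, ⟨w, hw, rfl, rfl⟩, hr⟩
      exact ⟨p, w, ⟨hr, hw⟩, rfl, rfl⟩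
    · rintro ⟨p, w, ⟨hr, hw⟩, rfl, rfl⟩
      exact ⟨w 0, ⟨w, hw, rfl, rfl⟩, hr⟩

end Matrix

theorem idxMat_pos_iff {M N s : ℕ} (Ω : Fin s → Set (Fin M × Fin N)) (v : Fin M × Fin N)
    (j : Fin s) : 0 < idxMat Ω v j ↔ v ∈ Ω j := by
  by_cases h : v ∈ Ω j <;> simp [idxMat, h]

theorem isISTraj_iff_isPosWalk {M N : ℕ} (L : Fin M → Fin N → Fin N) (ℓ : ℕ)
    (w : Fin (ℓ + 1) → Fin M × Fin N) : IsISTraj L ℓ w ↔ (inputStateMat L).IsPosWalk w := by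
  unfold IsISTraj Matrix.IsPosWalk
  refine forall_congr' fun t => ?_
  by_cases h : (w t.succ).2 = L (w t.castSucc).1 (w t.castSucc).2 <;> simp [inputStateMat, h]

theorem reachMat_entry_pos_iff_general (M N ℓ a b : ℕ)
    (L : Fin M → Fin N → Fin N)
    (Ω0 : Fin a → Set (Fin M × Fin N)) (Ωd : Fin b → Set (Fin M × Fin N))
    (i : Fin b) (j : Fin a) :
    0 < reachMat L ℓ Ω0 Ωd i j ↔
      ∃ w : Fin (ℓ + 1) → Fin M × Fin N,
        IsISTraj L ℓ w ∧ w 0 ∈ Ω0 j ∧ w (Fin.last ℓ) ∈ Ωd i := by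
  simp only [reachMat, Matrix.mul_mul_apply_pos_iff, Matrix.transpose_apply, idxMat_pos_iff,
    Matrix.pow_apply_pos_iff_exists_isPosWalk, isISTraj_iff_isPosWalk]
  constructor
  · rintro ⟨q, p, hq, ⟨w, hw, rfl, rfl⟩, hp⟩
    exact ⟨w, hw, hp, hq⟩
  · rintro ⟨w, hw, h0, hl⟩
    exact ⟨_, _, hl, ⟨w, hw, rfl, rfl⟩, h0⟩

/-- **Proposition 2.2.1(1).** `(C_ℓ) i j > 0` iff the network is `ℓ`-step
input-state set reachable from `Ω⁰ j` to `Ωᵈ i`. -/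
theorem reachMat_entry_pos_iff (M N ℓ a b : ℕ)
    (hM : 0 < M) (hN : 0 < N) (hℓ : 1 ≤ ℓ)
    (L : Fin M → Fin N → Fin N)
    (Ω0 : Fin a → Set (Fin M × Fin N)) (Ωd : Fin b → Set (Fin M × Fin N))
    (i : Fin b) (j : Fin a) :
    0 < reachMat L ℓ Ω0 Ωd i j ↔
      ∃ w : Fin (ℓ + 1) → Fin M × Fin N,
        IsISTraj L ℓ w ∧ w 0 ∈ Ω0 j ∧ w (Fin.last ℓ) ∈ Ωd i :=
  reachMat_entry_pos_iff_general M N ℓ a b L Ω0 Ωd i j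
end

section
/- Corollary 6.1 (minimum dwell time): Suppose that for every i ∈ Fin q and every (γ, θ) ∈ Fin M × Fin N with R γ θ = i there exist γ' ∈ Fin M with R γ' (L γ θ) ≠ i and γ'' ∈ Fin M with R γ'' (L γ θ) = i. Then for every initial logical state θ₀ ∈ Fin N there exists a logical input sequence γ : ℕ → Fin M such that the switching signal σ generated from θ₀ by γ respects the minimum dwell times d̲. -/
/-- A switching signal `σ` respects the minimum dwell times `d̲ : Fin q → ℕ` if,
whenever a run of a mode starts at time `s` (i.e. `s = 0` or `σ (s-1) ≠ σ s`),
`σ` stays at `σ s` on `[s, s + d̲ (σ s))`. -/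
def RespectsMDT {q : ℕ} (dm : Fin q → ℕ) (σ : ℕ → Fin q) : Prop :=
  ∀ s : ℕ, (s = 0 ∨ σ (s - 1) ≠ σ s) →
    ∀ t, s ≤ t → t < s + dm (σ s) → σ t = σ s

/-!
Realize the dwell times by a feedback controller whose memory is the age of the current run:
while the age is below `d̲` of the current mode, feed an input that keeps the mode from the next
logical state; once the dwell time has elapsed, feed one that switches away and reset the age.
A run can start only where the age is `0`, and the age grows by one per step until the dwell
time of the run's mode has elapsed, so the mode cannot change before then.
-/

theorem respectsMDT_of_age {q : ℕ} {dm : Fin q → ℕ} {σ : ℕ → Fin q} (age : ℕ → ℕ)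
    (h_zero : age 0 = 0)
    (h_succ : ∀ t, (σ (t + 1) = σ t ∧ age (t + 1) = age t + 1) ∨
      (dm (σ t) ≤ age t + 1 ∧ age (t + 1) = 0)) :
    RespectsMDT dm σ := by
  intro s hs t hst hlt
  have h_start : age s = 0 := by
    rcases s with _ | u
    · exact h_zero
    · rcases h_succ u with ⟨h_eq, -⟩ | ⟨-, h_reset⟩
      · exact absurd h_eq.symm (by simpa using hs)
      · exact h_reset
  have h_run : ∀ n < dm (σ s), σ (s + n) = σ s ∧ age (s + n) = n := by
    intro n
    induction n with
    | zero => exact fun _ => ⟨rfl, h_start⟩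
    | succ n ih =>
      intro hn
      obtain ⟨hσ, hage⟩ := ih (by omega)
      rcases h_succ (s + n) with ⟨hσ', hage'⟩ | ⟨h_expired, -⟩
      · exact ⟨hσ'.trans hσ, hage'.trans (by rw [hage])⟩
      · rw [hσ, hage] at h_expired
        omega
  obtain ⟨n, rfl⟩ := Nat.exists_eq_add_of_le hst
  exact (h_run n (by omega)).1

structure DwellState (N M : ℕ) where
  state : Fin N
  input : Fin M
  age : ℕ

section DwellLoop

variable {q N M : ℕ} (L : Fin M → Fin N → Fin N) (R : Fin M → Fin N → Fin q) (dm : Fin q → ℕ)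
  (keep switch : Fin M → Fin N → Fin M) (θ₀ : Fin N) (γ₀ : Fin M)

def dwellLoop : ℕ → DwellState N M
  | 0 => ⟨θ₀, γ₀, 0⟩
  | t + 1 =>
    let x := dwellLoop t
    if x.age + 1 < dm (R x.input x.state) then ⟨L x.input x.state, keep x.input x.state, x.age + 1⟩
    else ⟨L x.input x.state, switch x.input x.state, 0⟩

theorem logicState_dwellLoop (t : ℕ) :
    logicState L θ₀ (fun t => (dwellLoop L R dm keep switch θ₀ γ₀ t).input) t =
      (dwellLoop L R dm keep switch θ₀ γ₀ t).state := by
  induction t with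
  | zero => rfl
  | succ t ih =>
    simp only [logicState, dwellLoop, ih]
    split <;> rfl

theorem respectsMDT_dwellLoop (h_keep : ∀ γ θ, R (keep γ θ) (L γ θ) = R γ θ) :
    RespectsMDT dm (switchSig L R θ₀ fun t => (dwellLoop L R dm keep switch θ₀ γ₀ t).input) := by
  set x := dwellLoop L R dm keep switch θ₀ γ₀
  have hσ : ∀ t, switchSig L R θ₀ (fun t => (x t).input) t = R (x t).input (x t).state :=
    fun t => congrArg _ (logicState_dwellLoop L R dm keep switch θ₀ γ₀ t)
  refine respectsMDT_of_age (fun t => (x t).age) rfl fun t => ?_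
  simp only [hσ, x, dwellLoop]
  split
  · exact Or.inl ⟨h_keep _ _, rfl⟩
  · exact Or.inr ⟨by omega, rfl⟩

end DwellLoop

theorem mdt_realizability_general (q N M : ℕ) (hM : 0 < M)
    (L : Fin M → Fin N → Fin N) (R : Fin M → Fin N → Fin q)
    (dm : Fin q → ℕ)
    (h : ∀ (i : Fin q) (γ : Fin M) (θ : Fin N), R γ θ = i →
      (∃ γ' : Fin M, R γ' (L γ θ) ≠ i) ∧ (∃ γ'' : Fin M, R γ'' (L γ θ) = i)) :
    ∀ θ₀ : Fin N, ∃ γ : ℕ → Fin M, RespectsMDT dm (switchSig L R θ₀ γ) := by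
  choose switch _ using fun γ θ => (h (R γ θ) γ θ rfl).1
  choose keep h_keep using fun γ θ => (h (R γ θ) γ θ rfl).2
  exact fun θ₀ => ⟨_, respectsMDT_dwellLoop L R dm keep switch θ₀ ⟨0, hM⟩ h_keep⟩

/-- **Corollary 6.1 (minimum dwell time realizability).** -/
theorem mdt_realizability (q N M : ℕ) (hq : 0 < q) (hN : 0 < N) (hM : 0 < M)
    (L : Fin M → Fin N → Fin N) (R : Fin M → Fin N → Fin q)
    (dm : Fin q → ℕ) (hdm : ∀ i, 1 ≤ dm i)
    (h : ∀ (i : Fin q) (γ : Fin M) (θ : Fin N), R γ θ = i →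
      (∃ γ' : Fin M, R γ' (L γ θ) ≠ i) ∧ (∃ γ'' : Fin M, R γ'' (L γ θ) = i)) :
    ∀ θ₀ : Fin N, ∃ γ : ℕ → Fin M, RespectsMDT dm (switchSig L R θ₀ γ) :=
  mdt_realizability_general q N M hM L R dm h
end

section
/- Merged-system identity, equation (3.4) (STP aggregation of the SLS and the logical network): Define 𝐆 := (Mat L ⊗ I_{Fin n}) * (I_{Fin M × Fin N} ⊗ (𝐀 * (Mat R ⊗ I_{Fin n}))) * (Φ ⊗ I_{Fin n}) and 𝐇 := (Mat L ⊗ I_{Fin n}) * (I_{Fin M × Fin N} ⊗ (𝐁 * (Mat R ⊗ I_{Fin m}))) * (Φ ⊗ I_{Fin m}), where in each triple product the middle matrix's column index (Fin M × Fin N) × ((Fin M × Fin N) × Fin k) is identified with ((Fin M × Fin N) × (Fin M × Fin N)) × Fin k by the canonical associativity equivalence. Then for every (γ, θ) ∈ Fin M × Fin N, every x : Fin n → ℝ and every u : Fin m → ℝ: 𝐆 *ᵥ (e_{(γ,θ)} ⊗ x) = e_{L γ θ} ⊗ (A (R γ θ) *ᵥ x) and 𝐇 *ᵥ (e_{(γ,θ)}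 ⊗ u) = e_{L γ θ} ⊗ (B (R γ θ) *ᵥ u), where e_v denotes the standard basis vector Pi.single v 1 and (e_v ⊗ x) (w, i) = e_v w * x i. -/
open Matrix Kronecker

/-- The structure matrix of a map `F : Fin M → Fin N → Fin K`:
`(Mat F) α (γ, θ) = 1` if `F γ θ = α` and `0` otherwise. -/
def structMat {M N K : ℕ} (F : Fin M → Fin N → Fin K) :
    Matrix (Fin K) (Fin M × Fin N) ℝ :=
  fun α p => if F p.1 p.2 = α then 1 else 0

/-- The aggregated matrix `𝐀 = [A 0, A 1, ⋯]`, i.e. `𝐀 i (σ, j) = (A σ) i j`. -/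
def aggMat {n m q : ℕ} (A : Fin q → Matrix (Fin n) (Fin m) ℝ) :
    Matrix (Fin n) (Fin q × Fin m) ℝ :=
  fun i p => A p.1 i p.2

/-- The power-reducing matrix `Φ`: `Φ (v, w) z = 1` if `v = w = z` and `0`
otherwise, so that `Φ *ᵥ e_z = e_z ⊗ e_z`. -/
def powerRed (α : Type*) [DecidableEq α] : Matrix (α × α) α ℝ :=
  fun vw z => if vw.1 = z ∧ vw.2 = z then 1 else 0

/-- Standard basis vector `e_v = Pi.single v 1`. -/
def eVec {α : Type*} [DecidableEq α] (v : α) : α → ℝ := Pi.single v 1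

/-- Kronecker product of vectors: `(a ⊗ b) (w, i) = a w * b i`. -/
def vecKron {α β : Type*} (a : α → ℝ) (b : β → ℝ) : α × β → ℝ :=
  fun p => a p.1 * b p.2

/-- The merged-system matrix
`𝐆 = (Mat L ⊗ Iₙ) * (I_{MN} ⊗ (𝐀 * (Mat R ⊗ Iₙ))) * (Φ ⊗ Iₙ)`, with the middle
factor's columns reindexed by the canonical associativity equivalence. -/
noncomputable def mergedG {n q N M : ℕ} (A : Fin q → Matrix (Fin n) (Fin n) ℝ)
    (L : Fin M → Fin N → Fin N) (R : Fin M → Fin N → Fin q) :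
    Matrix (Fin N × Fin n) ((Fin M × Fin N) × Fin n) ℝ :=
  (structMat L ⊗ₖ (1 : Matrix (Fin n) (Fin n) ℝ)) *
    (Matrix.reindex (Equiv.refl ((Fin M × Fin N) × Fin n))
      (Equiv.prodAssoc (Fin M × Fin N) (Fin M × Fin N) (Fin n)).symm
      ((1 : Matrix (Fin M × Fin N) (Fin M × Fin N) ℝ) ⊗ₖ
        (aggMat A * (structMat R ⊗ₖ (1 : Matrix (Fin n) (Fin n) ℝ))))) *
    (powerRed (Fin M × Fin N) ⊗ₖ (1 : Matrix (Fin n) (Fin n) ℝ))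

/-- The merged-system matrix
`𝐇 = (Mat L ⊗ Iₙ) * (I_{MN} ⊗ (𝐁 * (Mat R ⊗ Iₘ))) * (Φ ⊗ Iₘ)`, with the middle
factor's columns reindexed by the canonical associativity equivalence. -/
noncomputable def mergedH {n m q N M : ℕ} (B : Fin q → Matrix (Fin n) (Fin m) ℝ)
    (L : Fin M → Fin N → Fin N) (R : Fin M → Fin N → Fin q) :
    Matrix (Fin N × Fin n) ((Fin M × Fin N) × Fin m) ℝ :=
  (structMat L ⊗ₖ (1 : Matrix (Fin n) (Fin n) ℝ)) *
    (Matrix.reindex (Equiv.refl ((Fin M × Fin N) × Fin n))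
      (Equiv.prodAssoc (Fin M × Fin N) (Fin M × Fin N) (Fin m)).symm
      ((1 : Matrix (Fin M × Fin N) (Fin M × Fin N) ℝ) ⊗ₖ
        (aggMat B * (structMat R ⊗ₖ (1 : Matrix (Fin m) (Fin m) ℝ))))) *
    (powerRed (Fin M × Fin N) ⊗ₖ (1 : Matrix (Fin m) (Fin m) ℝ))

lemma kron_mulVec {α β γ δ : Type*} [Fintype β] [Fintype δ]
    (P : Matrix α β ℝ) (Q : Matrix γ δ ℝ) (a : β → ℝ) (b : δ → ℝ) :
    (P ⊗ₖ Q) *ᵥ vecKron a b = vecKron (P *ᵥ a) (Q *ᵥ b) := by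
  ext ⟨i, k⟩
  simp only [mulVec, dotProduct, vecKron, kroneckerMap_apply, Fintype.sum_prod_type]
  rw [Finset.sum_mul_sum]
  exact Finset.sum_congr rfl fun j _ => Finset.sum_congr rfl fun l _ => by ring

lemma mulVec_eVec {α β : Type*} [Fintype β] [DecidableEq β]
    (P : Matrix α β ℝ) (v : β) : P *ᵥ eVec v = fun i => P i v := by
  ext i
  simp [mulVec, dotProduct, eVec, Pi.single_apply]

lemma structMat_mulVec_eVec {M N K : ℕ} (F : Fin M → Fin N → Fin K)
    (γ : Fin M) (θ : Fin N) :
    structMat F *ᵥ eVec (γ, θ) = eVec (F γ θ) := by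
  rw [mulVec_eVec]
  ext α
  simp [structMat, eVec, Pi.single_apply, eq_comm]

lemma powerRed_mulVec_eVec {α : Type*} [Fintype α] [DecidableEq α] (z : α) :
    powerRed α *ᵥ eVec z = vecKron (eVec z) (eVec z) := by
  rw [mulVec_eVec]
  ext ⟨v, w⟩
  simp only [powerRed, vecKron, eVec, Pi.single_apply, ite_and, eq_comm]
  by_cases h : z = v <;> by_cases h' : z = w <;> simp [h, h']

lemma aggMat_mulVec {n k q : ℕ} (A : Fin q → Matrix (Fin n) (Fin k) ℝ)
    (s : Fin q) (x : Fin k → ℝ) :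
    aggMat A *ᵥ vecKron (eVec s) x = A s *ᵥ x := by
  ext i
  simp only [mulVec, dotProduct, aggMat, vecKron, eVec, Pi.single_apply,
    Fintype.sum_prod_type]
  rw [Finset.sum_eq_single s]
  · simp
  · intro b _ hb; simp [hb]
  · simp

lemma reindex_refl_mulVec {α β γ : Type*} [Fintype β] [Fintype γ]
    (g : β ≃ γ) (P : Matrix α β ℝ) (u : γ → ℝ) :
    (Matrix.reindex (Equiv.refl α) g P) *ᵥ u = P *ᵥ (u ∘ g) := by
  ext r
  simp only [mulVec, dotProduct, Matrix.reindex_apply, Matrix.submatrix_apply,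
    Equiv.refl_symm, Equiv.refl_apply, Function.comp_apply]
  exact Fintype.sum_equiv g.symm _ _ fun c => by rw [Equiv.apply_symm_apply]

lemma merged_key {n k q N M : ℕ}
    (A : Fin q → Matrix (Fin n) (Fin k) ℝ)
    (L : Fin M → Fin N → Fin N) (R : Fin M → Fin N → Fin q)
    (γ : Fin M) (θ : Fin N) (x : Fin k → ℝ) :
    ((structMat L ⊗ₖ (1 : Matrix (Fin n) (Fin n) ℝ)) *
      (Matrix.reindex (Equiv.refl ((Fin M × Fin N) × Fin n))
        (Equiv.prodAssoc (Fin M × Fin N) (Fin M × Fin N) (Fin k)).symm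
        ((1 : Matrix (Fin M × Fin N) (Fin M × Fin N) ℝ) ⊗ₖ
          (aggMat A * (structMat R ⊗ₖ (1 : Matrix (Fin k) (Fin k) ℝ))))) *
      (powerRed (Fin M × Fin N) ⊗ₖ (1 : Matrix (Fin k) (Fin k) ℝ))) *ᵥ
        vecKron (eVec (γ, θ)) x =
      vecKron (eVec (L γ θ)) ((A (R γ θ)) *ᵥ x) := by
  rw [← Matrix.mulVec_mulVec, ← Matrix.mulVec_mulVec]
  rw [kron_mulVec, powerRed_mulVec_eVec, Matrix.one_mulVec]
  rw [reindex_refl_mulVec]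
  have hcomp : (vecKron (vecKron (eVec (γ, θ)) (eVec (γ, θ))) x) ∘
      (Equiv.prodAssoc (Fin M × Fin N) (Fin M × Fin N) (Fin k)).symm =
      vecKron (eVec (γ, θ)) (vecKron (eVec (γ, θ)) x) := by
    ext ⟨v, w, j⟩
    simp [vecKron, Equiv.prodAssoc, mul_assoc]
  rw [hcomp, kron_mulVec, Matrix.one_mulVec, ← Matrix.mulVec_mulVec,
    kron_mulVec, structMat_mulVec_eVec, Matrix.one_mulVec,
    kron_mulVec, structMat_mulVec_eVec, Matrix.one_mulVec, aggMat_mulVec]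

/-- **Merged-system identity, equation (3.4).**
`𝐆 *ᵥ (e_{(γ,θ)} ⊗ x) = e_{L γ θ} ⊗ (A (R γ θ) *ᵥ x)` and
`𝐇 *ᵥ (e_{(γ,θ)} ⊗ u) = e_{L γ θ} ⊗ (B (R γ θ) *ᵥ u)`. -/
theorem merged_system_identity (n m q N M : ℕ)
    (hn : 0 < n) (hm : 0 < m) (hq : 0 < q) (hN : 0 < N) (hM : 0 < M)
    (A : Fin q → Matrix (Fin n) (Fin n) ℝ) (B : Fin q → Matrix (Fin n) (Fin m) ℝ)
    (L : Fin M → Fin N → Fin N) (R : Fin M → Fin N → Fin q)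
    (γ : Fin M) (θ : Fin N) (x : Fin n → ℝ) (u : Fin m → ℝ) :
    (mergedG A L R).mulVec (vecKron (eVec (γ, θ)) x) =
        vecKron (eVec (L γ θ)) ((A (R γ θ)).mulVec x) ∧
      (mergedH B L R).mulVec (vecKron (eVec (γ, θ)) u) =
        vecKron (eVec (L γ θ)) ((B (R γ θ)).mulVec u) := by
  exact ⟨merged_key A L R γ θ x, merged_key B L R γ θ u⟩
end

section
/- Block structure of products of the merged-system matrices (established in the proofs of Theorems 4.1 and 4.2): Define G : Fin M → Matrix (Fin N × Fin n) (Fin N × Fin n) ℝ by G γ ((α, i), (β, j)) = (A (R γ β)) i j if L γ β = α, and 0 otherwise. Fix T ≥ 1, a logical input sequence γ : Fin T → Fin M and β ∈ Fin N; let θ 0 = β, θ (t+1) = L (γ t) (θ t), and σ t = R (γ t) (θ t). Then for all α ∈ Fin N and all i, j ∈ Fin n: (G (γ (T−1)) * G (γ (T−2)) * ⋯ * G (γ 0)) ((α, i), (β, j)) equals (A (σ (T−1)) * A (σ (T−2)) * ⋯ * A (σ 0)) i j if α = θ T, and equals 0 otherwise. In particular, in the block form of the product, the column of blocks indexed by β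 contains at most one nonzero n × n block, located at row-block θ T, and that block equals A (σ (T−1)) ⋯ A (σ 0). -/
/-- `matProd F T = F (T-1) * F (T-2) * ⋯ * F 0` (and `1` for `T = 0`). -/
def matProd {α : Type*} [Fintype α] [DecidableEq α]
    (F : ℕ → Matrix α α ℝ) : ℕ → Matrix α α ℝ
  | 0 => 1
  | T + 1 => F T * matProd F T

/-- The block matrices of the merged system:
`G γ ((α, i), (β, j)) = (A (R γ β)) i j` if `L γ β = α`, and `0` otherwise. -/
def blockG {n q N M : ℕ} (A : Fin q → Matrix (Fin n) (Fin n) ℝ)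
    (L : Fin M → Fin N → Fin N) (R : Fin M → Fin N → Fin q) (γ : Fin M) :
    Matrix (Fin N × Fin n) (Fin N × Fin n) ℝ :=
  fun p p' => if L γ p'.1 = p.1 then A (R γ p'.1) p.2 p'.2 else 0

/-! Induction on `T`: left multiplication by `G γ` sends a column of blocks whose only nonzero
block sits at row-block `θ` to one whose only nonzero block sits at row-block `L γ θ`, and
multiplies that block on the left by `A (R γ θ)`. -/

section

variable {n q N M : ℕ} (A : Fin q → Matrix (Fin n) (Fin n) ℝ)
  (L : Fin M → Fin N → Fin N) (R : Fin M → Fin N → Fin q)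

lemma blockG_mul_apply_of_block_column (γ : Fin M) (X : Matrix (Fin N × Fin n) (Fin N × Fin n) ℝ)
    (Y : Matrix (Fin n) (Fin n) ℝ) (θ β : Fin N) (j : Fin n)
    (hX : ∀ α k, X (α, k) (β, j) = if α = θ then Y k j else 0) (α : Fin N) (i : Fin n) :
    (blockG A L R γ * X) (α, i) (β, j) =
      if α = L γ θ then (A (R γ θ) * Y) i j else 0 := by
  simp only [Matrix.mul_apply, Fintype.sum_prod_type, blockG, hX, mul_ite, ite_mul, mul_zero,
    zero_mul]
  rw [Finset.sum_eq_single θ (fun θ' _ h => by simp [h]) (by simp)]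
  simp only [if_true, eq_comm (a := α)]
  split_ifs <;> simp

theorem matProd_blockG_apply (g : ℕ → Fin M) (T : ℕ) (β α : Fin N) (i j : Fin n) :
    matProd (fun t => blockG A L R (g t)) T (α, i) (β, j) =
      if α = logicState L β g T then
        matProd (fun t => A (R (g t) (logicState L β g t))) T i j
      else 0 := by
  induction T generalizing α i with
  | zero =>
    simp only [matProd, logicState, Matrix.one_apply, Prod.mk.injEq]
    split_ifs <;> simp_all
  | succ T ih => exact blockG_mul_apply_of_block_column A L R _ _ _ _ _ _ ih α i

end

theorem blockG_prod_structure_general (n q N M T : ℕ)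
    (hT : 1 ≤ T)
    (A : Fin q → Matrix (Fin n) (Fin n) ℝ)
    (L : Fin M → Fin N → Fin N) (R : Fin M → Fin N → Fin q)
    (γ : Fin T → Fin M) (β : Fin N) (α : Fin N) (i j : Fin n) :
    matProd (fun t => blockG A L R (extSeq hT γ t)) T (α, i) (β, j) =
      if α = logicState L β (extSeq hT γ) T then
        matProd
          (fun t => A (R (extSeq hT γ t) (logicState L β (extSeq hT γ) t))) T i j
      else 0 :=
  matProd_blockG_apply A L R (extSeq hT γ) T β α i j

/-- **Block structure of products of the merged-system matrices.** For a logical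
input sequence `γ` with logical state trajectory `θ` (from `θ 0 = β`) and
switching signals `σ t = R (γ t) (θ t)`:
`(G (γ (T-1)) * ⋯ * G (γ 0)) ((α, i), (β, j))` equals
`(A (σ (T-1)) * ⋯ * A (σ 0)) i j` if `α = θ T`, and `0` otherwise. -/
theorem blockG_prod_structure (n q N M T : ℕ)
    (hn : 0 < n) (hq : 0 < q) (hN : 0 < N) (hM : 0 < M) (hT : 1 ≤ T)
    (A : Fin q → Matrix (Fin n) (Fin n) ℝ)
    (L : Fin M → Fin N → Fin N) (R : Fin M → Fin N → Fin q)
    (γ : Fin T → Fin M) (β : Fin N) (α : Fin N) (i j : Fin n) :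
    matProd (fun t => blockG A L R (extSeq hT γ t)) T (α, i) (β, j) =
      if α = logicState L β (extSeq hT γ) T then
        matProd
          (fun t => A (R (extSeq hT γ t) (logicState L β (extSeq hT γ) t))) T i j
      else 0 :=
  blockG_prod_structure_general n q N M T hT A L R γ β α i j
end
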